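/- arXiv:1506.04681 — 4 statements merged into one kernel-verified Lean document; each statement's English description precedes it below -/
import Mathlib

section
/- Let h_1, ..., h_n : ℝ → ℝ be convex, continuously differentiable functions and let f ≤ n. Define F(x) as the minimum over subsets F₁ of A(x) = {i : h_i'(x) > 0} with |F₁| ≤ f of the sum of h_i'(x) over i ∈ A(x) \ F₁. Then F is a non-decreasing function of x. -/
/-!
Convexity makes every `h_i'` non-decreasing, so the sum `∑_{i ∈ A(x) \ F₁} h_i'` is
non-decreasing in `x` for each fixed `F₁`: its terms grow, and the indices that join `A(x)` add
positive terms. Hence a trimming set `F₁` optimal at `y ≥ x`, cut down to `F₁ ∩ A(x)`, is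
admissible at `x` with no larger value, so `F(x) ≤ F(y)`.
-/

open Finset

lemma ConvexOn.monotone_deriv {f : ℝ → ℝ} (hf : ConvexOn ℝ Set.univ f) (hd : Differentiable ℝ f) :
    Monotone (deriv f) :=
  fun a b hab => hf.monotoneOn_deriv (fun x _ => hd x) (Set.mem_univ a) (Set.mem_univ b) hab

section TrimmedPositiveSum

variable {ι : Type*} [Fintype ι] [DecidableEq ι]

def trimmedPositiveSums (f : ℕ) (g : ι → ℝ) : Set ℝ :=
  {s | ∃ F₁ : Finset ι, F₁ ⊆ univ.filter (fun i => 0 < g i) ∧ F₁.card ≤ f ∧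
    s = ∑ i ∈ univ.filter (fun i => 0 < g i) \ F₁, g i}

lemma sum_filter_pos_sdiff_mono {g g' : ι → ℝ} (hg : g ≤ g') (F₁ : Finset ι) :
    ∑ i ∈ univ.filter (fun i => 0 < g i) \ F₁, g i ≤
      ∑ i ∈ univ.filter (fun i => 0 < g' i) \ F₁, g' i := by
  have hA : univ.filter (fun i => 0 < g i) ⊆ univ.filter (fun i => 0 < g' i) :=
    monotone_filter_right _ fun i _ hi => hi.trans_le (hg i)
  calc ∑ i ∈ univ.filter (fun i => 0 < g i) \ F₁, g i
      ≤ ∑ i ∈ univ.filter (fun i => 0 < g i) \ F₁, g' i := sum_le_sum fun i _ => hg i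
    _ ≤ ∑ i ∈ univ.filter (fun i => 0 < g' i) \ F₁, g' i := by
      refine sum_le_sum_of_subset_of_nonneg (sdiff_subset_sdiff hA le_rfl) fun i hi _ => ?_
      exact (mem_filter.mp (mem_sdiff.mp hi).1).2.le

lemma exists_trimmedPositiveSums_le {f : ℕ} {g g' : ι → ℝ} (hg : g ≤ g') {s' : ℝ}
    (hs' : s' ∈ trimmedPositiveSums f g') : ∃ s ∈ trimmedPositiveSums f g, s ≤ s' := by
  obtain ⟨F₁, -, hcard, rfl⟩ := hs'
  refine ⟨_, ⟨F₁ ∩ univ.filter (fun i => 0 < g i), inter_subset_right,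
    (card_le_card inter_subset_left).trans hcard, rfl⟩, ?_⟩
  rw [sdiff_inter_self_right]
  exact sum_filter_pos_sdiff_mono hg F₁

lemma IsLeast.trimmedPositiveSums_mono {f : ℕ} {g g' : ι → ℝ} (hg : g ≤ g') {a a' : ℝ}
    (ha : IsLeast (trimmedPositiveSums f g) a) (ha' : IsLeast (trimmedPositiveSums f g') a') :
    a ≤ a' :=
  let ⟨_, hs, hs_le⟩ := exists_trimmedPositiveSums_le hg ha'.1
  (ha.2 hs).trans hs_le

end TrimmedPositiveSum

theorem trimmed_positive_gradient_sum_monotone_general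
    (n f : ℕ) (h : Fin n → ℝ → ℝ)
    (hconv : ∀ i, ConvexOn ℝ Set.univ (h i))
    (hsmooth : ∀ i, ContDiff ℝ 1 (h i))
    (F : ℝ → ℝ)
    (hF : ∀ x : ℝ,
      IsLeast {s : ℝ | ∃ F₁ : Finset (Fin n),
        F₁ ⊆ Finset.univ.filter (fun i => 0 < deriv (h i) x) ∧ F₁.card ≤ f ∧
        s = ∑ i ∈ (Finset.univ.filter (fun i => 0 < deriv (h i) x)) \ F₁, deriv (h i) x}
        (F x)) :
    Monotone F := by
  have hderiv : ∀ i, Monotone (deriv (h i)) := fun i =>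
    (hconv i).monotone_deriv ((hsmooth i).differentiable one_ne_zero)
  intro x y hxy
  exact IsLeast.trimmedPositiveSums_mono (fun i => hderiv i hxy) (hF x) (hF y)

theorem trimmed_positive_gradient_sum_monotone
    (n f : ℕ) (hf : f ≤ n) (h : Fin n → ℝ → ℝ)
    (hconv : ∀ i, ConvexOn ℝ Set.univ (h i))
    (hsmooth : ∀ i, ContDiff ℝ 1 (h i))
    (F : ℝ → ℝ)
    (hF : ∀ x : ℝ,
      IsLeast {s : ℝ | ∃ F₁ : Finset (Fin n),
        F₁ ⊆ Finset.univ.filter (fun i => 0 < deriv (h i) x) ∧ F₁.card ≤ f ∧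
        s = ∑ i ∈ (Finset.univ.filter (fun i => 0 < deriv (h i) x)) \ F₁, deriv (h i) x}
        (F x)) :
    Monotone F :=
  trimmed_positive_gradient_sum_monotone_general n f h hconv hsmooth F hF
end

section
/- Let h_1, ..., h_n : ℝ → ℝ be convex, continuously differentiable functions and let f ≤ n. Define G(x) as the maximum over subsets F₂ of B(x) = {i : h_i'(x) < 0} with |F₂| ≤ f of the sum of h_i'(x) over i ∈ B(x) \ F₂. Then G is a non-decreasing function of x. -/
/-! Convexity makes every `h_i'` non-decreasing. The sum of `h_i'(x)` over `B(x) \ F₂` equals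
the sum of `min (h_i'(x)) 0` over the complement of `F₂`, which is non-decreasing in `x`; and the
trimming set `F₂` optimal at `x`, cut down to `B(y)`, is admissible at `y` with the same sum. -/

open Finset

section TrimmedNegSums

variable {ι : Type*} [Fintype ι] [DecidableEq ι]

def trimmedNegSums (k : ℕ) (a : ι → ℝ) : Set ℝ :=
  {s | ∃ F : Finset ι, F ⊆ univ.filter (fun i => a i < 0) ∧ F.card ≤ k ∧
    s = ∑ i ∈ univ.filter (fun i => a i < 0) \ F, a i}

theorem sum_filter_neg_sdiff_eq_sum_min (a : ι → ℝ) (F : Finset ι) :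
    ∑ i ∈ univ.filter (fun i => a i < 0) \ F, a i = ∑ i ∈ Fᶜ, min (a i) 0 := by
  rw [sdiff_eq_inter_compl, filter_inter, univ_inter, sum_filter]
  refine sum_congr rfl fun i _ => ?_
  split_ifs with hi
  · exact (min_eq_left hi.le).symm
  · exact (min_eq_right (not_lt.mp hi)).symm

theorem sum_filter_neg_sdiff_mono {a b : ι → ℝ} (hab : a ≤ b) (F : Finset ι) :
    ∑ i ∈ univ.filter (fun i => a i < 0) \ F, a i ≤
      ∑ i ∈ univ.filter (fun i => b i < 0) \ F, b i := by
  simp only [sum_filter_neg_sdiff_eq_sum_min]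
  exact sum_le_sum fun i _ => min_le_min_right 0 (hab i)

theorem exists_ge_mem_trimmedNegSums {a b : ι → ℝ} (hab : a ≤ b) {k : ℕ} {s : ℝ}
    (hs : s ∈ trimmedNegSums k a) : ∃ t ∈ trimmedNegSums k b, s ≤ t := by
  obtain ⟨F, -, hF, rfl⟩ := hs
  set B := univ.filter (fun i => b i < 0)
  refine ⟨_, ⟨F ∩ B, inter_subset_right, (card_le_card inter_subset_left).trans hF, rfl⟩, ?_⟩
  rw [sdiff_inter_self_right]
  exact sum_filter_neg_sdiff_mono hab F

theorem le_of_isGreatest_trimmedNegSums {a b : ι → ℝ} (hab : a ≤ b) {k : ℕ} {x y : ℝ}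
    (hx : IsGreatest (trimmedNegSums k a) x) (hy : IsGreatest (trimmedNegSums k b) y) :
    x ≤ y :=
  let ⟨_, ht, hxt⟩ := exists_ge_mem_trimmedNegSums hab hx.1
  hxt.trans (hy.2 ht)

end TrimmedNegSums

theorem ConvexOn.monotone_deriv_s1 {g : ℝ → ℝ} (hconv : ConvexOn ℝ Set.univ g)
    (hdiff : Differentiable ℝ g) : Monotone (deriv g) :=
  monotoneOn_univ.mp (hconv.monotoneOn_deriv fun x _ => hdiff x)

theorem trimmed_negative_gradient_sum_monotone_general
    (n f : ℕ) (h : Fin n → ℝ → ℝ)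
    (hconv : ∀ i, ConvexOn ℝ Set.univ (h i))
    (hsmooth : ∀ i, ContDiff ℝ 1 (h i))
    (G : ℝ → ℝ)
    (hG : ∀ x : ℝ,
      IsGreatest {s : ℝ | ∃ F₂ : Finset (Fin n),
        F₂ ⊆ Finset.univ.filter (fun i => deriv (h i) x < 0) ∧ F₂.card ≤ f ∧
        s = ∑ i ∈ (Finset.univ.filter (fun i => deriv (h i) x < 0)) \ F₂, deriv (h i) x}
        (G x)) :
    Monotone G := by
  have hderiv_mono (i : Fin n) : Monotone (deriv (h i)) :=
    (hconv i).monotone_deriv_s1 ((hsmooth i).differentiable one_ne_zero)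
  exact fun x y hxy =>
    le_of_isGreatest_trimmedNegSums (fun i => hderiv_mono i hxy) (hG x) (hG y)

theorem trimmed_negative_gradient_sum_monotone
    (n f : ℕ) (hf : f ≤ n) (h : Fin n → ℝ → ℝ)
    (hconv : ∀ i, ConvexOn ℝ Set.univ (h i))
    (hsmooth : ∀ i, ContDiff ℝ 1 (h i))
    (G : ℝ → ℝ)
    (hG : ∀ x : ℝ,
      IsGreatest {s : ℝ | ∃ F₂ : Finset (Fin n),
        F₂ ⊆ Finset.univ.filter (fun i => deriv (h i) x < 0) ∧ F₂.card ≤ f ∧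
        s = ∑ i ∈ (Finset.univ.filter (fun i => deriv (h i) x < 0)) \ F₂, deriv (h i) x}
        (G x)) :
    Monotone G :=
  trimmed_negative_gradient_sum_monotone_general n f h hconv hsmooth G hG
end

section
/- Let h_1, ..., h_n : ℝ → ℝ be convex, continuously differentiable functions and let f ≤ n. The function F(x) = min over subsets F₁ ⊆ A(x) with |F₁| ≤ f of Σ_{i ∈ A(x) − F₁} h_i'(x), where A(x) = {i : h_i'(x) > 0}, is continuous on ℝ. -/
open scoped Classical

/-
Writing `d⁺ = max d 0`, removing at most `f` of the positive terms from `∑_{d i > 0} d i` is the same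
as removing at most `f` arbitrary terms from `∑ d⁺ i`, because dropping a non-positive index changes
nothing. Hence `F` is the minimum, over the finitely many sets `F₁` with `|F₁| ≤ f`, of the
continuous functions `x ↦ ∑_{i ∉ F₁} (h i)'(x)⁺`, and a finite minimum of continuous functions is
continuous.
-/

section TrimmedPositiveSum

variable {ι : Type*} [Fintype ι] [DecidableEq ι]

noncomputable def trimmedPositiveSum (f : ℕ) (d : ι → ℝ) : ℝ :=
  (Finset.univ.filter fun F₁ : Finset ι => F₁.card ≤ f).inf' ⟨∅, by simp⟩
    fun F₁ => ∑ i ∈ F₁ᶜ, max (d i) 0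

theorem sum_pos_sdiff_eq_sum_compl_max (d : ι → ℝ) (F₁ : Finset ι) :
    ∑ i ∈ Finset.univ.filter (fun i => 0 < d i) \ F₁, d i = ∑ i ∈ F₁ᶜ, max (d i) 0 := by
  calc ∑ i ∈ Finset.univ.filter (fun i => 0 < d i) \ F₁, d i
      = ∑ i ∈ Finset.univ.filter (fun i => 0 < d i) \ F₁, max (d i) 0 :=
        Finset.sum_congr rfl fun i hi => by
          simp only [Finset.mem_sdiff, Finset.mem_filter] at hi
          exact (max_eq_left hi.1.2.le).symm
    _ = ∑ i ∈ F₁ᶜ, max (d i) 0 := by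
        exact Finset.sum_subset (fun i => by simp_all) fun i => by simp_all

theorem isLeast_trimmedPositiveSum (f : ℕ) (d : ι → ℝ) :
    IsLeast {s : ℝ | ∃ F₁ : Finset ι,
      F₁ ⊆ Finset.univ.filter (fun i => 0 < d i) ∧ F₁.card ≤ f ∧
      s = ∑ i ∈ (Finset.univ.filter (fun i => 0 < d i)) \ F₁, d i}
      (trimmedPositiveSum f d) := by
  set A := Finset.univ.filter fun i => 0 < d i
  constructor
  · obtain ⟨F₁, hF₁, hmin⟩ := Finset.exists_mem_eq_inf' (⟨∅, by simp⟩ :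
      (Finset.univ.filter fun F₁ : Finset ι => F₁.card ≤ f).Nonempty)
      fun F₁ => ∑ i ∈ F₁ᶜ, max (d i) 0
    have hcard : F₁.card ≤ f := (Finset.mem_filter.1 hF₁).2
    refine ⟨F₁ ∩ A, Finset.inter_subset_right,
      (Finset.card_le_card Finset.inter_subset_left).trans hcard, ?_⟩
    rw [Finset.sdiff_inter_self_right, sum_pos_sdiff_eq_sum_compl_max]
    exact hmin
  · rintro s ⟨F₁, -, hcard, rfl⟩
    rw [sum_pos_sdiff_eq_sum_compl_max]
    exact Finset.inf'_le _ (by simpa using hcard)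

theorem continuous_trimmedPositiveSum {X : Type*} [TopologicalSpace X] (f : ℕ)
    {d : ι → X → ℝ} (hd : ∀ i, Continuous (d i)) :
    Continuous fun x => trimmedPositiveSum f fun i => d i x :=
  Continuous.finset_inf'_apply _ fun _ _ =>
    continuous_finsetSum _ fun i _ => (hd i).max continuous_const

end TrimmedPositiveSum

theorem trimmed_positive_gradient_sum_continuous_general
    (n f : ℕ) (h : Fin n → ℝ → ℝ)
    (hsmooth : ∀ i, ContDiff ℝ 1 (h i))
    (F : ℝ → ℝ)
    (hF : ∀ x : ℝ,
      IsLeast {s : ℝ | ∃ F₁ : Finset (Fin n),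
        F₁ ⊆ Finset.univ.filter (fun i => 0 < deriv (h i) x) ∧ F₁.card ≤ f ∧
        s = ∑ i ∈ (Finset.univ.filter (fun i => 0 < deriv (h i) x)) \ F₁, deriv (h i) x}
        (F x)) :
    Continuous F := by
  have hF_eq : F = fun x => trimmedPositiveSum f fun i => deriv (h i) x :=
    funext fun x => (hF x).unique (isLeast_trimmedPositiveSum f _)
  rw [hF_eq]
  exact continuous_trimmedPositiveSum f fun i => (hsmooth i).continuous_deriv le_rfl

theorem trimmed_positive_gradient_sum_continuous
    (n f : ℕ) (hf : f ≤ n) (h : Fin n → ℝ → ℝ)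
    (hconv : ∀ i, ConvexOn ℝ Set.univ (h i))
    (hsmooth : ∀ i, ContDiff ℝ 1 (h i))
    (F : ℝ → ℝ)
    (hF : ∀ x : ℝ,
      IsLeast {s : ℝ | ∃ F₁ : Finset (Fin n),
        F₁ ⊆ Finset.univ.filter (fun i => 0 < deriv (h i) x) ∧ F₁.card ≤ f ∧
        s = ∑ i ∈ (Finset.univ.filter (fun i => 0 < deriv (h i) x)) \ F₁, deriv (h i) x}
        (F x)) :
    Continuous F :=
  trimmed_positive_gradient_sum_continuous_general n f h hsmooth F hF
end

section
/- Let N be a finite nonempty index set, and for each i ∈ N let h_i : ℝ → ℝ be convex and continuously differentiable with nonempty compact set of minimizers X_i = argmin h_i. Let α_i ≥ 0 with Σ_{i∈N} α_i = 1. Then every minimizer of Σ_{i∈N} α_i h_i lies in the convex hull of ∪_{i∈N} X_i. -/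
/-!
Pick a minimizer `w i` of each `h i`. If `x` minimizes none of the `h i`, then
`h i (w i) < h i x`, and convexity makes `h i` strictly smaller than `h i x` on the half-open
segment `[w i, x)`. A point `b ≠ x` lying in all these segments would therefore strictly decrease
the weighted sum, so no such point exists; in `ℝ` this traps `x` between the smallest and the
largest of the `w i`.
-/

open Set

theorem ConvexOn.lt_right_of_mem_segment {𝕜 E β : Type*} [Field 𝕜] [LinearOrder 𝕜]
    [IsStrictOrderedRing 𝕜] [AddCommGroup E] [Module 𝕜 E] [AddCommMonoid β] [LinearOrder β]
    [IsOrderedCancelAddMonoid β] [Module 𝕜 β] [PosSMulStrictMono 𝕜 β] {s : Set E} {f : E → β}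
    (hf : ConvexOn 𝕜 s f) {w x b : E} (hw : w ∈ s) (hx : x ∈ s) (hb : b ∈ segment 𝕜 w x)
    (hbx : b ≠ x) (hwx : f w < f x) : f b < f x := by
  rw [← insert_endpoints_openSegment] at hb
  rcases hb with rfl | rfl | hb
  · exact hwx
  · exact absurd rfl hbx
  · by_contra! hxb
    exact hxb.not_gt (hf.lt_right_of_left_lt hw hx hb (hwx.trans_le hxb))

theorem sum_mul_lt_sum_mul_of_sum_eq_one {ι : Type*} [Fintype ι] {α u v : ι → ℝ}
    (hα : ∀ i, 0 ≤ α i) (hsum : ∑ i, α i = 1) (huv : ∀ i, u i < v i) :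
    ∑ i, α i * u i < ∑ i, α i * v i := by
  obtain ⟨j, -, hj⟩ : ∃ j ∈ Finset.univ, 0 < α j :=
    Finset.exists_lt_of_sum_lt (by simp [hsum])
  exact Finset.sum_lt_sum (fun i _ => mul_le_mul_of_nonneg_left (huv i).le (hα i))
    ⟨j, Finset.mem_univ j, mul_lt_mul_of_pos_left (huv j) hj⟩

theorem eq_of_forall_mem_segment_of_isMinimizer {E ι : Type*} [AddCommGroup E] [Module ℝ E]
    [Fintype ι] {h : ι → E → ℝ} (hconv : ∀ i, ConvexOn ℝ univ (h i)) {α : ι → ℝ}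
    (hα : ∀ i, 0 ≤ α i) (hsum : ∑ i, α i = 1) {x : E}
    (hx : ∀ y, ∑ i, α i * h i x ≤ ∑ i, α i * h i y) {w : ι → E} (hw : ∀ i, h i (w i) < h i x)
    {b : E} (hb : ∀ i, b ∈ segment ℝ (w i) x) : b = x := by
  by_contra hbx
  exact (hx b).not_gt <| sum_mul_lt_sum_mul_of_sum_eq_one hα hsum fun i =>
    (hconv i).lt_right_of_mem_segment (mem_univ _) (mem_univ _) (hb i) hbx (hw i)

theorem minimizer_in_convexHull_of_argmins_general
    {ι : Type*} [Fintype ι] (h : ι → ℝ → ℝ)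
    (hconv : ∀ i, ConvexOn ℝ Set.univ (h i))
    (hne : ∀ i, {x : ℝ | ∀ y : ℝ, h i x ≤ h i y}.Nonempty)
    (α : ι → ℝ) (hα : ∀ i, 0 ≤ α i) (hsum : ∑ i, α i = 1)
    (x : ℝ) (hx : ∀ y : ℝ, ∑ i, α i * h i x ≤ ∑ i, α i * h i y) :
    x ∈ convexHull ℝ (⋃ i, {z : ℝ | ∀ y : ℝ, h i z ≤ h i y}) := by
  by_cases hxX : x ∈ ⋃ i, {z : ℝ | ∀ y : ℝ, h i z ≤ h i y}
  · exact subset_convexHull ℝ _ hxX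
  simp only [mem_iUnion, mem_ofPred_eq, not_exists, not_forall, not_le] at hxX
  choose w hw using hne
  have hwx (i : ι) : h i (w i) < h i x := by
    obtain ⟨y, hy⟩ := hxX i
    exact (hw i y).trans_lt hy
  have : Nonempty ι := by
    by_contra!
    simp at hsum
  obtain ⟨i₀, -, hi₀⟩ := Finset.univ.exists_min_image w Finset.univ_nonempty
  obtain ⟨i₁, -, hi₁⟩ := Finset.univ.exists_max_image w Finset.univ_nonempty
  have hw₀x : w i₀ ≤ x := by
    by_contra! hlt
    refine hlt.ne' (eq_of_forall_mem_segment_of_isMinimizer hconv hα hsum hx hwx fun i => ?_)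
    rw [segment_eq_uIcc]
    exact mem_uIcc_of_ge hlt.le (hi₀ i (Finset.mem_univ i))
  have hxw₁ : x ≤ w i₁ := by
    by_contra! hlt
    refine hlt.ne (eq_of_forall_mem_segment_of_isMinimizer hconv hα hsum hx hwx fun i => ?_)
    rw [segment_eq_uIcc]
    exact mem_uIcc_of_le (hi₁ i (Finset.mem_univ i)) hlt.le
  refine segment_subset_convexHull (mem_iUnion_of_mem i₀ (hw i₀)) (mem_iUnion_of_mem i₁ (hw i₁)) ?_
  rw [segment_eq_uIcc]
  exact mem_uIcc_of_le hw₀x hxw₁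

/-- Every minimizer of a convex combination of admissible functions lies in the
convex hull of the union of the individual minimizer sets. -/
theorem minimizer_in_convexHull_of_argmins
    {ι : Type*} [Fintype ι] [Nonempty ι] (h : ι → ℝ → ℝ)
    (hconv : ∀ i, ConvexOn ℝ Set.univ (h i))
    (hsmooth : ∀ i, ContDiff ℝ 1 (h i))
    (hne : ∀ i, {x : ℝ | ∀ y : ℝ, h i x ≤ h i y}.Nonempty)
    (hcpt : ∀ i, IsCompact {x : ℝ | ∀ y : ℝ, h i x ≤ h i y})
    (α : ι → ℝ) (hα : ∀ i, 0 ≤ α i) (hsum : ∑ i, α i = 1)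
    (x : ℝ) (hx : ∀ y : ℝ, ∑ i, α i * h i x ≤ ∑ i, α i * h i y) :
    x ∈ convexHull ℝ (⋃ i, {z : ℝ | ∀ y : ℝ, h i z ≤ h i y}) :=
  minimizer_in_convexHull_of_argmins_general h hconv hne α hα hsum x hx
end
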